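/- arXiv:2007.03000 — 4 statements merged into one kernel-verified Lean document; each statement's English description precedes it below -/
import Mathlib

section
/- Suppose A_0 = V W^H X and A_1 = V Λ W^H X, where V ∈ ℂ^{n×k}, W^H X ∈ ℂ^{k×m}, Λ ∈ ℂ^{k×k} is diagonal, V has full column rank k, and W^H X has full row rank k. Let A_0 = V_0 Σ_0 W_0^H be a compact singular value decomposition with V_0 ∈ ℂ^{n×k}, Σ_0 ∈ ℂ^{k×k} invertible diagonal, W_0 ∈ ℂ^{m×k}. Then V_0^H V is invertible and B := V_0^H A_1 W_0 Σ_0^{-1} = (V_0^H V) Λ (V_0^H V)^{-1}; in particular B is similar to Λ, so B and Λ have the same eigenvalues. -/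
open Matrix

/-!
Sandwiching the compact SVD between `V₀ᴴ` and `W₀` gives `(V₀ᴴ V) (G W₀) = Σ₀`. As `Σ₀` is
invertible, `G W₀ Σ₀⁻¹` is a right inverse of the square matrix `V₀ᴴ V`, hence its inverse, and
`V₀ᴴ A₁ W₀ Σ₀⁻¹ = (V₀ᴴ V) Λ (G W₀ Σ₀⁻¹)` is the claimed similarity.
-/

namespace Matrix

theorem conjTranspose_mul_mul_conjTranspose_mul_eq {ι ι' κ R : Type*} [Fintype ι] [Fintype ι']
    [Fintype κ] [DecidableEq κ] [Semiring R] [Star R] {U : Matrix ι κ R} {W : Matrix ι' κ R}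
    (hU : Uᴴ * U = 1) (hW : Wᴴ * W = 1) (S : Matrix κ κ R) :
    Uᴴ * (U * S * Wᴴ) * W = S := by
  calc Uᴴ * (U * S * Wᴴ) * W = (Uᴴ * U) * S * (Wᴴ * W) := by simp only [Matrix.mul_assoc]
    _ = S := by rw [hU, hW, Matrix.one_mul, Matrix.mul_one]

section RightInverse

variable {ι R : Type*} [Fintype ι] [DecidableEq ι] [CommRing R] {X Y S : Matrix ι ι R}

theorem mul_mul_nonsing_inv_eq_one_of_mul_eq (h : X * Y = S) (hS : IsUnit S.det) :
    X * (Y * S⁻¹) = 1 := by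
  rw [← Matrix.mul_assoc, h, mul_nonsing_inv _ hS]

theorem isUnit_det_of_mul_eq (h : X * Y = S) (hS : IsUnit S.det) : IsUnit X.det :=
  isUnit_det_of_right_inverse (mul_mul_nonsing_inv_eq_one_of_mul_eq h hS)

theorem inv_eq_mul_nonsing_inv_of_mul_eq (h : X * Y = S) (hS : IsUnit S.det) :
    X⁻¹ = Y * S⁻¹ :=
  inv_eq_right_inv (mul_mul_nonsing_inv_eq_one_of_mul_eq h hS)

end RightInverse

end Matrix

theorem stmt3_general {n m k : ℕ}
    (V : Matrix (Fin n) (Fin k) ℂ) (G : Matrix (Fin k) (Fin m) ℂ)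
    (lam : Fin k → ℂ)
    (A0 A1 : Matrix (Fin n) (Fin m) ℂ)
    (hA0 : A0 = V * G) (hA1 : A1 = V * Matrix.diagonal lam * G)
    (V0 : Matrix (Fin n) (Fin k) ℂ) (W0 : Matrix (Fin m) (Fin k) ℂ)
    (S0 : Matrix (Fin k) (Fin k) ℂ) (hS0unit : IsUnit S0.det)
    (hV0 : V0ᴴ * V0 = 1) (hW0 : W0ᴴ * W0 = 1)
    (hSVD : A0 = V0 * S0 * W0ᴴ) :
    IsUnit (V0ᴴ * V).det ∧
      V0ᴴ * A1 * W0 * S0⁻¹ = (V0ᴴ * V) * Matrix.diagonal lam * (V0ᴴ * V)⁻¹ := by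
  have hfactor : (V0ᴴ * V) * (G * W0) = S0 := by
    rw [← conjTranspose_mul_mul_conjTranspose_mul_eq hV0 hW0 S0, ← hSVD, hA0]
    simp only [Matrix.mul_assoc]
  refine ⟨isUnit_det_of_mul_eq hfactor hS0unit, ?_⟩
  rw [inv_eq_mul_nonsing_inv_of_mul_eq hfactor hS0unit, hA1]
  simp only [Matrix.mul_assoc]

/-- Beyn's linearization: if `A₀ = V G`, `A₁ = V Λ G` with `V` of full column rank `k`,
`G` of full row rank `k`, `Λ` diagonal, and `A₀ = V₀ Σ₀ W₀ᴴ` is a compact SVD, then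
`V₀ᴴ V` is invertible and `B := V₀ᴴ A₁ W₀ Σ₀⁻¹ = (V₀ᴴ V) Λ (V₀ᴴ V)⁻¹`, so `B` is similar to `Λ`. -/
theorem stmt3 {n m k : ℕ}
    (V : Matrix (Fin n) (Fin k) ℂ) (G : Matrix (Fin k) (Fin m) ℂ)
    (lam : Fin k → ℂ)
    (hVrank : V.rank = k) (hGrank : G.rank = k)
    (A0 A1 : Matrix (Fin n) (Fin m) ℂ)
    (hA0 : A0 = V * G) (hA1 : A1 = V * Matrix.diagonal lam * G)
    (V0 : Matrix (Fin n) (Fin k) ℂ) (W0 : Matrix (Fin m) (Fin k) ℂ)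
    (S0 : Matrix (Fin k) (Fin k) ℂ) (sig : Fin k → ℂ)
    (hS0 : S0 = Matrix.diagonal sig) (hS0unit : IsUnit S0.det)
    (hV0 : V0ᴴ * V0 = 1) (hW0 : W0ᴴ * W0 = 1)
    (hSVD : A0 = V0 * S0 * W0ᴴ) :
    IsUnit (V0ᴴ * V).det ∧
      V0ᴴ * A1 * W0 * S0⁻¹ = (V0ᴴ * V) * Matrix.diagonal lam * (V0ᴴ * V)⁻¹ :=
  stmt3_general V G lam A0 A1 hA0 hA1 V0 W0 S0 hS0unit hV0 hW0 hSVD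
end

section
/- With the hypotheses of the Beyn linearization (A_0 = VG, A_1 = VΛG, V of rank k, G of rank k, Λ diagonal, compact SVD A_0 = V_0Σ_0W_0^H), if (μ, y) is an eigenpair of B = V_0^H A_1 W_0 Σ_0^{-1}, then μ is a diagonal entry of Λ and x = V_0 y is a corresponding eigenvector in the column space of V, i.e., x = V c for some c with Λc = μc. -/
/-!
Since `W₀ᴴ W₀ = 1` and `S₀` is invertible, the SVD gives `V₀ = V Q` with `Q = G W₀ S₀⁻¹`.
Then `(V₀ᴴ V) Q = V₀ᴴ V₀ = 1`, so `B = (V₀ᴴ V) Λ Q` is similar to `Λ` and `c = Q y` is an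
eigenvector of `Λ` for `μ` with `V c = V₀ y`.
-/

open Matrix Module End

section

variable {ι R : Type*} [Fintype ι] [DecidableEq ι] [CommRing R]

theorem hasEigenvector_toLin'_of_mul_eq_one {P Q D : Matrix ι ι R} (hPQ : P * Q = 1)
    {μ : R} {y : ι → R} (hy : HasEigenvector (toLin' (P * D * Q)) μ y) :
    HasEigenvector (toLin' D) μ (Q *ᵥ y) := by
  have hQP : Q * P = 1 := mul_eq_one_comm.mp hPQ
  have heig : (P * D * Q) *ᵥ y = μ • y := by simpa only [toLin'_apply] using hy.apply_eq_smul
  refine ⟨mem_eigenspace_iff.mpr ?_, fun hQy ↦ hy.2 ?_⟩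
  · calc toLin' D (Q *ᵥ y) = (Q * P * D * Q) *ᵥ y := by simp [hQP, mulVec_mulVec]
      _ = Q *ᵥ ((P * D * Q) *ᵥ y) := by simp only [mulVec_mulVec, Matrix.mul_assoc]
      _ = μ • (Q *ᵥ y) := by rw [heig, mulVec_smul]
  · calc y = (P * Q) *ᵥ y := by rw [hPQ, one_mulVec]
      _ = 0 := by rw [← mulVec_mulVec, hQy, mulVec_zero]

end

theorem mul_mul_mul_nonsing_inv_eq {n m k r R : Type*} [Fintype m] [Fintype k] [Fintype r]
    [DecidableEq k] [CommRing R] {V : Matrix n r R} {G : Matrix r m R} {V₀ : Matrix n k R}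
    {S₀ : Matrix k k R} {W : Matrix k m R} {W₀ : Matrix m k R}
    (hfac : V * G = V₀ * S₀ * W) (hW : W * W₀ = 1) (hS₀ : IsUnit S₀.det) :
    V * (G * W₀ * S₀⁻¹) = V₀ :=
  calc V * (G * W₀ * S₀⁻¹) = V₀ * (S₀ * ((W * W₀) * S₀⁻¹)) := by
        simp only [← Matrix.mul_assoc, hfac]
    _ = V₀ := by rw [hW, Matrix.one_mul, mul_nonsing_inv _ hS₀, Matrix.mul_one]

theorem stmt4_general {n m k : ℕ}
    (V : Matrix (Fin n) (Fin k) ℂ) (G : Matrix (Fin k) (Fin m) ℂ)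
    (lam : Fin k → ℂ)
    (A0 A1 : Matrix (Fin n) (Fin m) ℂ)
    (hA0 : A0 = V * G) (hA1 : A1 = V * Matrix.diagonal lam * G)
    (V0 : Matrix (Fin n) (Fin k) ℂ) (W0 : Matrix (Fin m) (Fin k) ℂ)
    (S0 : Matrix (Fin k) (Fin k) ℂ)
    (hS0unit : IsUnit S0.det)
    (hV0 : V0ᴴ * V0 = 1) (hW0 : W0ᴴ * W0 = 1)
    (hSVD : A0 = V0 * S0 * W0ᴴ)
    (B : Matrix (Fin k) (Fin k) ℂ) (hB : B = V0ᴴ * A1 * W0 * S0⁻¹)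
    (μ : ℂ) (y : Fin k → ℂ) (hy : y ≠ 0) (heig : B.mulVec y = μ • y) :
    (∃ i : Fin k, lam i = μ) ∧
      ∃ c : Fin k → ℂ, V0.mulVec y = V.mulVec c ∧
        (Matrix.diagonal lam).mulVec c = μ • c := by
  set Q := G * W0 * S0⁻¹
  have hVQ : V * Q = V0 := mul_mul_mul_nonsing_inv_eq (hA0 ▸ hSVD) hW0 hS0unit
  have hPQ : V0ᴴ * V * Q = 1 := by rw [Matrix.mul_assoc, hVQ, hV0]
  have hBsim : B = V0ᴴ * V * diagonal lam * Q := by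
    simp only [hB, hA1, Q, Matrix.mul_assoc]
  have hc : HasEigenvector (toLin' (diagonal lam)) μ (Q *ᵥ y) :=
    hasEigenvector_toLin'_of_mul_eq_one hPQ
      ⟨mem_eigenspace_iff.mpr (by simpa [← hBsim] using heig), hy⟩
  exact ⟨(hasEigenvalue_toLin'_diagonal_iff lam).mp (hasEigenvalue_of_hasEigenvector hc),
    Q *ᵥ y, by rw [mulVec_mulVec, hVQ], by simpa using hc.apply_eq_smul⟩

/-- Eigenpairs of Beyn's reduced matrix `B = V₀ᴴ A₁ W₀ S₀⁻¹`: if `(μ, y)` is an eigenpair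
of `B`, then `μ` is a diagonal entry of `Λ` and `x = V₀ y` lies in the column space of `V`,
i.e. `x = V c` with `Λ c = μ c`. -/
theorem stmt4 {n m k : ℕ}
    (V : Matrix (Fin n) (Fin k) ℂ) (G : Matrix (Fin k) (Fin m) ℂ)
    (lam : Fin k → ℂ)
    (hVrank : V.rank = k) (hGrank : G.rank = k)
    (A0 A1 : Matrix (Fin n) (Fin m) ℂ)
    (hA0 : A0 = V * G) (hA1 : A1 = V * Matrix.diagonal lam * G)
    (V0 : Matrix (Fin n) (Fin k) ℂ) (W0 : Matrix (Fin m) (Fin k) ℂ)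
    (S0 : Matrix (Fin k) (Fin k) ℂ) (sig : Fin k → ℂ)
    (hS0 : S0 = Matrix.diagonal sig) (hS0unit : IsUnit S0.det)
    (hV0 : V0ᴴ * V0 = 1) (hW0 : W0ᴴ * W0 = 1)
    (hSVD : A0 = V0 * S0 * W0ᴴ)
    (B : Matrix (Fin k) (Fin k) ℂ) (hB : B = V0ᴴ * A1 * W0 * S0⁻¹)
    (μ : ℂ) (y : Fin k → ℂ) (hy : y ≠ 0) (heig : B.mulVec y = μ • y) :
    (∃ i : Fin k, lam i = μ) ∧
      ∃ c : Fin k → ℂ, V0.mulVec y = V.mulVec c ∧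
        (Matrix.diagonal lam).mulVec c = μ • c :=
  stmt4_general V G lam A0 A1 hA0 hA1 V0 W0 S0 hS0unit hV0 hW0 hSVD B hB μ y hy heig
end

section
/- In the block Hankel factorization H_0 = V_{[K]} G_{[K]}, H_1 = V_{[K]} Λ G_{[K]} (with Λ ∈ ℂ^{r×r} diagonal), if V_{[K]} has full column rank r and G_{[K]} has full row rank r, and H_0 = V_0 Σ_0 W_0^H is a compact SVD with Σ_0 ∈ ℂ^{r×r} invertible, then V_0^H H_1 W_0 Σ_0^{-1} is similar to Λ; hence its eigenvalues are exactly the diagonal entries of Λ. -/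
/-! Multiplying both factorizations by `V₀ᴴ` on the left and `W₀` on the right gives
`V₀ᴴ H₀ W₀ = A B = Σ₀` and `V₀ᴴ H₁ W₀ = A Λ B` with `A = V₀ᴴ V_[K]`, `B = G_[K] W₀` square. Since `A B = Σ₀` is invertible,
so are `A` and `B`, and `A Λ B (A B)⁻¹ = A Λ A⁻¹`. -/

open Matrix

namespace Matrix

variable {k m n R : Type*} [Fintype k] [Fintype m] [Fintype n] [DecidableEq n]
  [CommRing R]

theorem mul_mul_mul_eq_of_mul_eq_one {P : Matrix n k R} {Q : Matrix k n R} {S : Matrix n n R}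
    {T : Matrix n m R} {U : Matrix m n R} (hPQ : P * Q = 1) (hTU : T * U = 1) :
    P * (Q * S * T) * U = S := by
  calc P * (Q * S * T) * U = (P * Q) * S * (T * U) := by simp only [Matrix.mul_assoc]
    _ = S := by rw [hPQ, hTU, Matrix.one_mul, Matrix.mul_one]

theorem mul_mul_mul_nonsing_inv_mul_eq_conj {A B D : Matrix n n R} (h : IsUnit (A * B).det) :
    A * D * B * (A * B)⁻¹ = A * D * A⁻¹ := by
  have hB : IsUnit B.det := isUnit_of_mul_isUnit_right (det_mul A B ▸ h)
  calc A * D * B * (A * B)⁻¹ = A * D * (B * B⁻¹) * A⁻¹ := by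
        simp only [mul_inv_rev, Matrix.mul_assoc]
    _ = A * D * A⁻¹ := by rw [mul_nonsing_inv B hB, Matrix.mul_one]

end Matrix

theorem stmt9_general {N M r : ℕ}
    (VK : Matrix (Fin N) (Fin r) ℂ) (GK : Matrix (Fin r) (Fin M) ℂ) (lam : Fin r → ℂ)
    (H0 H1 : Matrix (Fin N) (Fin M) ℂ)
    (hH0 : H0 = VK * GK) (hH1 : H1 = VK * Matrix.diagonal lam * GK)
    (V0 : Matrix (Fin N) (Fin r) ℂ) (W0 : Matrix (Fin M) (Fin r) ℂ)
    (S0 : Matrix (Fin r) (Fin r) ℂ) (hS0unit : IsUnit S0.det)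
    (hV0 : V0ᴴ * V0 = 1) (hW0 : W0ᴴ * W0 = 1)
    (hSVD : H0 = V0 * S0 * W0ᴴ) :
    ∃ S : Matrix (Fin r) (Fin r) ℂ, IsUnit S.det ∧
      V0ᴴ * H1 * W0 * S0⁻¹ = S * Matrix.diagonal lam * S⁻¹ := by
  have hcompress : V0ᴴ * VK * (GK * W0) = S0 := by
    rw [← mul_mul_mul_eq_of_mul_eq_one (S := S0) hV0 hW0, ← hSVD, hH0]
    simp only [Matrix.mul_assoc]
  have hH1compress : V0ᴴ * H1 * W0 = V0ᴴ * VK * diagonal lam * (GK * W0) := by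
    rw [hH1]
    simp only [Matrix.mul_assoc]
  have hunit : IsUnit (V0ᴴ * VK * (GK * W0)).det := hcompress ▸ hS0unit
  refine ⟨V0ᴴ * VK, isUnit_of_mul_isUnit_left (det_mul (V0ᴴ * VK) (GK * W0) ▸ hunit), ?_⟩
  rw [hH1compress, ← hcompress, mul_mul_mul_nonsing_inv_mul_eq_conj hunit]

/-- Higher-moment Beyn linearization: if `H₀ = V_[K] G_[K]`, `H₁ = V_[K] Λ G_[K]` with `V_[K]`
of full column rank `r`, `G_[K]` of full row rank `r`, `Λ` diagonal, and `H₀ = V₀ S₀ W₀ᴴ` a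
compact SVD with `S₀` invertible, then `V₀ᴴ H₁ W₀ S₀⁻¹` is similar to `Λ`. -/
theorem stmt9 {N M r : ℕ}
    (VK : Matrix (Fin N) (Fin r) ℂ) (GK : Matrix (Fin r) (Fin M) ℂ) (lam : Fin r → ℂ)
    (hVrank : VK.rank = r) (hGrank : GK.rank = r)
    (H0 H1 : Matrix (Fin N) (Fin M) ℂ)
    (hH0 : H0 = VK * GK) (hH1 : H1 = VK * Matrix.diagonal lam * GK)
    (V0 : Matrix (Fin N) (Fin r) ℂ) (W0 : Matrix (Fin M) (Fin r) ℂ)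
    (S0 : Matrix (Fin r) (Fin r) ℂ) (sig : Fin r → ℂ)
    (hS0 : S0 = Matrix.diagonal sig) (hS0unit : IsUnit S0.det)
    (hV0 : V0ᴴ * V0 = 1) (hW0 : W0ᴴ * W0 = 1)
    (hSVD : H0 = V0 * S0 * W0ᴴ) :
    ∃ S : Matrix (Fin r) (Fin r) ℂ, IsUnit S.det ∧
      V0ᴴ * H1 * W0 * S0⁻¹ = S * Matrix.diagonal lam * S⁻¹ :=
  stmt9_general VK GK lam H0 H1 hH0 hH1 V0 W0 S0 hS0unit hV0 hW0 hSVD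
end

section
/- With the trapezoidal rule on the circle as above, if instead |λ − c| > r (eigenvalue outside the contour), then Σ_{j=0}^{N−1} ω_j (z_j − λ)^{-1} = 1/(1 − ((λ−c)/r)^N), which tends to 0 geometrically as N → ∞; hence the rational filter value at points outside the contour decays to 0 at rate (r/|λ−c|)^N. -/
open Complex Finset

lemma zsum18 (N k : ℕ) (hk0 : 0 < k) (hk : k < N) :
    ∑ j ∈ range N, Complex.exp (-(2*Real.pi*Complex.I) * k / N) ^ j = 0 := by
  set ζ := Complex.exp (-(2*Real.pi*Complex.I) * k / N) with hζdef
  have hN : (0:ℕ) < N := lt_trans hk0 hk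
  have hNne : (N:ℂ) ≠ 0 := Nat.cast_ne_zero.mpr hN.ne'
  have h2 : (2*Real.pi*Complex.I) ≠ 0 := by
    simp [Complex.I_ne_zero, Real.pi_ne_zero]
  have hζN : ζ ^ N = 1 := by
    rw [hζdef, ← Complex.exp_nat_mul]
    have : (N:ℂ) * (-(2*Real.pi*Complex.I) * k / N) = (-(k:ℤ)) * (2*Real.pi*Complex.I) := by
      push_cast
      field_simp
    rw [this]
    simpa using Complex.exp_int_mul_two_pi_mul_I (-(k:ℤ))
  have hζ1 : ζ ≠ 1 := by
    intro h
    rw [hζdef, Complex.exp_eq_one_iff] at h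
    obtain ⟨n, hn⟩ := h
    field_simp at hn
    have hc : (2*Real.pi*Complex.I) * (-(k:ℂ)) = (2*Real.pi*Complex.I) * ((n:ℂ)*N) := by
      linear_combination (2*Real.pi*Complex.I) * hn
    have hc2 : (-(k:ℂ)) = (n:ℂ)*N := mul_left_cancel₀ h2 hc
    have hint : -(k:ℤ) = n * N := by exact_mod_cast hc2
    rcases lt_trichotomy n 0 with h' | h' | h'
    · nlinarith [hint, (by exact_mod_cast hk : (k:ℤ) < N)]
    · simp [h'] at hint; omega
    · nlinarith [hint, (by exact_mod_cast hk0 : (0:ℤ) < k)]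
  rw [geom_sum_eq hζ1, hζN]
  simp

lemma keysum18 (w : ℂ) (hw : 1 < ‖w‖) (N : ℕ) (hN : 0 < N) :
    ∑ j ∈ range N,
        Complex.exp (2*Real.pi*Complex.I*j/N) / (Complex.exp (2*Real.pi*Complex.I*j/N) - w)
      = N / (1 - w ^ N) := by
  have hNne : (N:ℂ) ≠ 0 := Nat.cast_ne_zero.mpr hN.ne'
  have hwN : (1 : ℂ) - w ^ N ≠ 0 := by
    intro h
    have hw1 : w ^ N = 1 := by linear_combination -h
    have : ‖w‖ ^ N = 1 := by
      rw [← norm_pow, hw1, norm_one]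
    nlinarith [one_lt_pow₀ hw hN.ne']
  have habsE : ∀ j : ℕ, ‖Complex.exp (2*Real.pi*Complex.I*j/N)‖ = 1 := by
    intro j
    have : 2*Real.pi*Complex.I*j/N = ((2*Real.pi*j/N : ℝ) : ℂ) * Complex.I := by
      push_cast; ring
    rw [this, Complex.norm_exp_ofReal_mul_I]
  have hEne : ∀ j : ℕ, Complex.exp (2*Real.pi*Complex.I*j/N) ≠ 0 := fun j => Complex.exp_ne_zero _
  have hEsub : ∀ j : ℕ, Complex.exp (2*Real.pi*Complex.I*j/N) - w ≠ 0 := by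
    intro j h
    have : Complex.exp (2*Real.pi*Complex.I*j/N) = w := sub_eq_zero.mp h
    rw [← this, habsE j] at hw
    exact lt_irrefl _ hw
  have hterm : ∀ j ∈ range N,
      Complex.exp (2*Real.pi*Complex.I*j/N) / (Complex.exp (2*Real.pi*Complex.I*j/N) - w)
        = (∑ k ∈ range N, w ^ k * Complex.exp (-(2*Real.pi*Complex.I) * k / N) ^ j)
            / (1 - w ^ N) := by
    intro j _
    set e := Complex.exp (2*Real.pi*Complex.I*j/N) with he
    have hfN : (e⁻¹) ^ N = 1 := by
      rw [inv_pow, inv_eq_one]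
      rw [he, ← Complex.exp_nat_mul]
      have : (N:ℂ) * (2*Real.pi*Complex.I*j/N) = (j:ℤ) * (2*Real.pi*Complex.I) := by
        push_cast; field_simp
      rw [this]
      simpa using Complex.exp_int_mul_two_pi_mul_I (j:ℤ)
    have hgeo : (∑ k ∈ range N, (w * e⁻¹) ^ k) * (w * e⁻¹ - 1) = (w * e⁻¹) ^ N - 1 :=
      geom_sum_mul _ _
    have hwe : (w * e⁻¹) ^ N = w ^ N := by
      rw [mul_pow, hfN, mul_one]
    have hsum : (∑ k ∈ range N, (w * e⁻¹) ^ k) * (1 - w * e⁻¹) = 1 - w ^ N := by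
      have := hgeo
      rw [hwe] at this
      linear_combination -this
    have hkeq : ∀ k : ℕ, (w * e⁻¹) ^ k = w ^ k * Complex.exp (-(2*Real.pi*Complex.I) * k / N) ^ j := by
      intro k
      rw [mul_pow]
      congr 1
      rw [he, ← Complex.exp_neg, ← Complex.exp_nat_mul, ← Complex.exp_nat_mul]
      congr 1
      ring
    rw [← Finset.sum_congr rfl (fun k _ => hkeq k)]
    rw [eq_div_iff hwN, ← hsum]
    have hene : e ≠ 0 := hEne j
    have hesub : e - w ≠ 0 := hEsub j
    field_simp
  rw [Finset.sum_congr rfl hterm, ← Finset.sum_div]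
  congr 1
  rw [Finset.sum_comm]
  rw [Finset.sum_eq_single 0]
  · simp
  · intro k hk hk0
    rw [← Finset.mul_sum, zsum18 N k (Nat.pos_of_ne_zero hk0) (Finset.mem_range.mp hk), mul_zero]
  · intro h
    simp at h
    omega

/-- Rational filter decay outside the contour: with nodes `z_j = c + r e^{2πij/N}` and weights
`ω_j = (z_j - c)/N`, for `|λ - c| > r` the quadrature sum equals `1/(1 - ((λ-c)/r)^N)`,
is bounded by `2 (r/|λ-c|)^N` once `(r/|λ-c|)^N ≤ 1/2`, and tends to `0` as `N → ∞`. -/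
theorem stmt18 (c : ℂ) (r : ℝ) (hr : 0 < r) (lam : ℂ)
    (hlam : r < ‖lam - c‖) :
    (∀ N : ℕ, 0 < N →
      (∑ j ∈ Finset.range N,
          ((c + (r : ℂ) * Complex.exp (2 * Real.pi * Complex.I * j / N) - c) / N) /
            (c + (r : ℂ) * Complex.exp (2 * Real.pi * Complex.I * j / N) - lam)) =
        1 / (1 - ((lam - c) / (r : ℂ)) ^ N)) ∧
    (∀ N : ℕ, 0 < N → (r / ‖lam - c‖) ^ N ≤ 1 / 2 →
      ‖1 / (1 - ((lam - c) / (r : ℂ)) ^ N)‖ ≤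
        2 * (r / ‖lam - c‖) ^ N) ∧
    Filter.Tendsto
      (fun N : ℕ => (1 : ℂ) / (1 - ((lam - c) / (r : ℂ)) ^ N))
      Filter.atTop (nhds 0) := by
  have hrne : (r : ℂ) ≠ 0 := by exact_mod_cast hr.ne'
  set w : ℂ := (lam - c) / (r : ℂ) with hwdef
  have habs0 : 0 < ‖lam - c‖ := lt_trans hr hlam
  have habsw : ‖w‖ = ‖lam - c‖ / r := by
    rw [hwdef, norm_div, Complex.norm_real, Real.norm_eq_abs, abs_of_pos hr]
  have hw : 1 < ‖w‖ := by
    rw [habsw, lt_div_iff₀ hr]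
    linarith
  set t : ℝ := r / ‖lam - c‖ with htdef
  have ht0 : 0 < t := div_pos hr habs0
  have ht1 : t < 1 := by rw [htdef, div_lt_one habs0]; exact hlam
  have hbound : ∀ N : ℕ, 0 < N → t ^ N ≤ 1 / 2 →
      ‖1 / (1 - w ^ N)‖ ≤ 2 * t ^ N := by
    intro N hN htN
    have htpow : 0 < t ^ N := pow_pos ht0 N
    have habswN : ‖w ^ N‖ = (t ^ N)⁻¹ := by
      rw [norm_pow, habsw, ← inv_pow]
      congr 1
      rw [htdef]
      field_simp
    have hlow : (t ^ N)⁻¹ - 1 ≤ ‖1 - w ^ N‖ := by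
      have h : ‖w ^ N‖ - 1 ≤ ‖1 - w ^ N‖ := by
        have h := norm_sub_norm_le (w ^ N) (1 : ℂ)
        rw [norm_sub_rev] at h
        simpa using h
      rw [habswN] at h
      exact h
    have hinv : (t ^ N) * (t ^ N)⁻¹ = 1 := mul_inv_cancel₀ htpow.ne'
    have hhalf : (t ^ N)⁻¹ / 2 ≤ (t ^ N)⁻¹ - 1 := by nlinarith [inv_pos.mpr htpow]
    have hbpos : 0 < ‖1 - w ^ N‖ := by
      calc (0:ℝ) < (t ^ N)⁻¹ / 2 := by positivity
        _ ≤ (t ^ N)⁻¹ - 1 := hhalf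
        _ ≤ _ := hlow
    rw [norm_div, norm_one, div_le_iff₀ hbpos]
    have hle : (t ^ N)⁻¹ / 2 ≤ ‖1 - w ^ N‖ := le_trans hhalf hlow
    calc (1:ℝ) = 2 * t ^ N * ((t ^ N)⁻¹ / 2) := by field_simp
      _ ≤ 2 * t ^ N * ‖1 - w ^ N‖ :=
          mul_le_mul_of_nonneg_left hle (by positivity)
  refine ⟨?_, hbound, ?_⟩
  · -- quadrature identity
    intro N hN
    have hNne : (N:ℂ) ≠ 0 := Nat.cast_ne_zero.mpr hN.ne'
    have key := keysum18 w hw N hN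
    have hterm : ∀ j ∈ range N,
        ((c + (r : ℂ) * Complex.exp (2 * Real.pi * Complex.I * j / N) - c) / N) /
            (c + (r : ℂ) * Complex.exp (2 * Real.pi * Complex.I * j / N) - lam)
          = (Complex.exp (2*Real.pi*Complex.I*j/N) / (Complex.exp (2*Real.pi*Complex.I*j/N) - w)) / N := by
      intro j _
      set e := Complex.exp (2*Real.pi*Complex.I*j/N) with he
      have habsE : ‖e‖ = 1 := by
        rw [he]
        have : 2*Real.pi*Complex.I*(j:ℂ)/N = ((2*Real.pi*j/N : ℝ) : ℂ) * Complex.I := by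
          push_cast; ring
        rw [this, Complex.norm_exp_ofReal_mul_I]
      have hesub : e - w ≠ 0 := by
        intro h
        have : e = w := sub_eq_zero.mp h
        rw [← this, habsE] at hw
        exact lt_irrefl _ hw
      have hrew : c + (r:ℂ) * e - lam = (r:ℂ) * (e - w) := by
        rw [hwdef]
        field_simp
        ring
      have h1 : c + (r:ℂ) * e - c = (r:ℂ) * e := by ring
      rw [h1, hrew, div_div, div_div,
        div_eq_div_iff (mul_ne_zero hNne (mul_ne_zero hrne hesub)) (mul_ne_zero hesub hNne)]
      ring
    rw [Finset.sum_congr rfl hterm, ← Finset.sum_div, key, div_div, mul_comm, ← div_div,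
      div_self hNne]
  · -- limit
    have htend : Filter.Tendsto (fun N : ℕ => 2 * t ^ N) Filter.atTop (nhds 0) := by
      have := tendsto_pow_atTop_nhds_zero_of_lt_one ht0.le ht1
      simpa using this.const_mul 2
    apply squeeze_zero_norm' _ htend
    have hev : ∀ᶠ N : ℕ in Filter.atTop, t ^ N ≤ 1/2 ∧ 0 < N := by
      have h1 : ∀ᶠ N : ℕ in Filter.atTop, t ^ N ≤ 1/2 :=
        (tendsto_pow_atTop_nhds_zero_of_lt_one ht0.le ht1).eventually_le_const (by norm_num)
      exact h1.and (Filter.eventually_gt_atTop 0)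
    refine hev.mono fun N hNp => ?_
    have := hbound N hNp.2 hNp.1
    simpa using this
end
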